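/- arXiv:1811.08785 — 4 statements merged into one kernel-verified Lean document; each statement's English description precedes it below -/
import Mathlib

section
/- Let μ : 𝔻 → ℂ be a measurable, essentially bounded function on the unit disk, and for z ∈ 𝔻* define φ(z) = −(6/π)·∫_𝔻 μ(w)/(w − z)⁴ dA(w). Then for every z ∈ 𝔻*, |φ(z)|²·(|z|² − 1)³ ≤ (36/π)·(|z|² − 1)·∫_𝔻 |μ(w)|²/|w − z|⁴ dA(w). -/
/-!
Write `μ w / (w - z) ^ 4` as the product of `μ w / (w - z) ^ 2` and `1 / (w - z) ^ 2`; by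
Cauchy–Schwarz it suffices to know `∫_{|w| < 1} |w - z|⁻⁴ dA(w) = π / (|z|² - 1)²`. This is
computed in polar coordinates. On the circle `|w| = r < |z|` we have `w̄ = r² / w`, which turns
`|w - z|⁻⁴ dθ` into a rational differential in `w` whose only pole inside the circle is a double
pole at `r² / z̄`; Cauchy's formula for the derivative gives the circle integral
`2π (r² + |z|²) / (|z|² - r²)³`, and `π r² / (|z|² - r²)²` is an antiderivative of `r` times it.
-/

open MeasureTheory Metric Set Real ComplexConjugate

theorem sq_norm_integral_mul_le {α E : Type*} [MeasurableSpace α] {ν : Measure α}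
    [NormedRing E] [NormedSpace ℝ E] {f g : α → E}
    (hf : MemLp f 2 ν) (hg : MemLp g 2 ν) :
    ‖∫ x, f x * g x ∂ν‖ ^ 2 ≤ (∫ x, ‖f x‖ ^ 2 ∂ν) * ∫ x, ‖g x‖ ^ 2 ∂ν := by
  have holder := integral_mul_norm_le_Lp_mul_Lq Real.HolderConjugate.two_two
    (by simpa using hf) (by simpa using hg)
  simp only [Real.rpow_two] at holder
  have hnorm : ‖∫ x, f x * g x ∂ν‖ ≤ ∫ x, ‖f x‖ * ‖g x‖ ∂ν :=
    (norm_integral_le_integral_norm _).trans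
      (integral_mono_of_nonneg (.of_forall fun _ => norm_nonneg _)
        (hf.norm.integrable_mul hg.norm) (.of_forall fun x => norm_mul_le _ _))
  have hA : 0 ≤ ∫ x, ‖f x‖ ^ 2 ∂ν := integral_nonneg fun _ => by positivity
  have hB : 0 ≤ ∫ x, ‖g x‖ ^ 2 ∂ν := integral_nonneg fun _ => by positivity
  calc ‖∫ x, f x * g x ∂ν‖ ^ 2
      ≤ ((∫ x, ‖f x‖ ^ 2 ∂ν) ^ (1 / 2 : ℝ) * (∫ x, ‖g x‖ ^ 2 ∂ν) ^ (1 / 2 : ℝ)) ^ 2 := by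
        gcongr; exact hnorm.trans holder
    _ = (∫ x, ‖f x‖ ^ 2 ∂ν) * ∫ x, ‖g x‖ ^ 2 ∂ν := by
        rw [mul_pow, ← Real.sqrt_eq_rpow, ← Real.sqrt_eq_rpow, Real.sq_sqrt hA, Real.sq_sqrt hB]

theorem setIntegral_ball_eq_intervalIntegral_circleMap {E : Type*} [NormedAddCommGroup E]
    [NormedSpace ℝ E] {f : ℂ → E} (hf : StronglyMeasurable f) {R C : ℝ} (hR : 0 ≤ R)
    (hC : ∀ w ∈ ball (0 : ℂ) R, ‖f w‖ ≤ C) :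
    ∫ w in ball (0 : ℂ) R, f w = ∫ r in 0..R, r • ∫ θ in 0..2 * π, f (circleMap 0 r θ) := by
  set S : Set (ℝ × ℝ) := Ioo 0 R ×ˢ Ioo (-π) π
  have hS : MeasurableSet S := measurableSet_Ioo.prod measurableSet_Ioo
  have hpolar : ∀ p : ℝ × ℝ, Complex.polarCoord.symm p = circleMap 0 p.1 p.2 := fun p => by
    rw [Complex.polarCoord_symm_apply]; simp [circleMap, Complex.exp_mul_I]
  have htarget : Complex.polarCoord.target ∩ {p | circleMap 0 p.1 p.2 ∈ ball 0 R} = S := by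
    ext ⟨r, θ⟩
    simp only [Complex.polarCoord_target, mem_inter_iff, mem_prod, mem_Ioi, mem_ofPred_eq,
      mem_ball_zero_iff, norm_circleMap_zero, S, mem_Ioo]
    constructor
    · rintro ⟨⟨hr, hθ⟩, hrR⟩; exact ⟨⟨hr, by rwa [abs_of_pos hr] at hrR⟩, hθ⟩
    · rintro ⟨⟨hr, hrR⟩, hθ⟩; exact ⟨⟨hr, hθ⟩, by rwa [abs_of_pos hr]⟩
  have hint : IntegrableOn (fun p : ℝ × ℝ => p.1 • f (circleMap 0 p.1 p.2)) S := by
    refine IntegrableOn.of_bound ?_ ?_ (R * C) ?_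
    · rw [Measure.volume_eq_prod, Measure.prod_prod]
      exact ENNReal.mul_lt_top measure_Ioo_lt_top measure_Ioo_lt_top
    · refine (measurable_fst.stronglyMeasurable.smul (hf.comp_measurable ?_)).aestronglyMeasurable
      simp only [circleMap]; fun_prop
    · rw [ae_restrict_iff' hS]
      refine .of_forall fun ⟨r, θ⟩ ⟨⟨hr, hrR⟩, _⟩ => ?_
      have hw : circleMap 0 r θ ∈ ball (0 : ℂ) R := by
        rwa [mem_ball_zero_iff, norm_circleMap_zero, abs_of_pos hr]
      rw [norm_smul, Real.norm_of_nonneg hr.le]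
      exact mul_le_mul hrR.le (hC _ hw) (norm_nonneg _) hR
  calc ∫ w in ball (0 : ℂ) R, f w
      = ∫ p in Complex.polarCoord.target, p.1 • (ball 0 R).indicator f (circleMap 0 p.1 p.2) := by
        rw [← integral_indicator measurableSet_ball, ← Complex.integral_comp_polarCoord_symm]
        simp_rw [hpolar]
        rfl
    _ = ∫ p in S, p.1 • f (circleMap 0 p.1 p.2) := by
        have hball : MeasurableSet {p : ℝ × ℝ | circleMap 0 p.1 p.2 ∈ ball 0 R} :=
          measurableSet_ball.preimage (by simp only [circleMap]; fun_prop)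
        rw [← htarget, ← setIntegral_indicator hball]
        congr 1 with p
        rw [indicator_smul_apply]
        rfl
    _ = ∫ r in Ioo 0 R, r • ∫ θ in Ioo (-π) π, f (circleMap 0 r θ) := by
        rw [Measure.volume_eq_prod, setIntegral_prod _ hint]
        simp_rw [integral_smul]
    _ = ∫ r in 0..R, r • ∫ θ in 0..2 * π, f (circleMap 0 r θ) := by
        have hperiod : ∀ r, ∫ θ in Ioo (-π) π, f (circleMap 0 r θ) =
            ∫ θ in 0..2 * π, f (circleMap 0 r θ) := fun r => by
          have h := ((periodic_circleMap 0 r).comp f).intervalIntegral_add_eq (-π) 0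
          rw [zero_add, show -π + 2 * π = π by ring] at h
          rw [← integral_Ioc_eq_integral_Ioo,
            ← intervalIntegral.integral_of_le (by linarith [pi_pos])]
          exact h
        simp_rw [hperiod, intervalIntegral.integral_of_le hR, integral_Ioc_eq_integral_Ioo]

theorem ofReal_norm_sub_sq_of_norm_eq {w z : ℂ} {r : ℝ} (hw : ‖w‖ = r) (hw0 : w ≠ 0) :
    ((‖w - z‖ ^ 2 : ℝ) : ℂ) = (w - z) * (r ^ 2 - conj z * w) / w := by
  have hconj : conj w = r ^ 2 / w := by
    rw [eq_div_iff hw0, mul_comm, Complex.mul_conj, Complex.normSq_eq_norm_sq, hw]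
    push_cast; ring
  rw [Complex.sq_norm, ← Complex.mul_conj, map_sub, hconj]
  field_simp

theorem ofReal_inv_norm_sub_pow_four_of_norm_eq {w z : ℂ} {r : ℝ} (hr : 0 < r) (hw : ‖w‖ = r)
    (hrz : r < ‖z‖) :
    (((‖w - z‖ ^ 4)⁻¹ : ℝ) : ℂ) =
      w ^ 2 / (conj z ^ 2 * (w - r ^ 2 / conj z) ^ 2 * (w - z) ^ 2) := by
  have hw0 : w ≠ 0 := norm_pos_iff.mp (hw ▸ hr)
  have hwz : w - z ≠ 0 := sub_ne_zero.mpr fun h => by rw [h] at hw; linarith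
  have hzc : conj z ≠ 0 := by simpa [← norm_pos_iff] using hr.trans hrz
  have hrw : (r : ℂ) ^ 2 - conj z * w ≠ 0 := by
    refine sub_ne_zero.mpr fun h => ?_
    have := congrArg norm h
    rw [norm_mul, Complex.norm_conj, hw, norm_pow, Complex.norm_real,
      Real.norm_of_nonneg hr.le] at this
    nlinarith
  calc (((‖w - z‖ ^ 4)⁻¹ : ℝ) : ℂ) = (((‖w - z‖ ^ 2 : ℝ) : ℂ) ^ 2)⁻¹ := by push_cast; ring
    _ = _ := by
      rw [ofReal_norm_sub_sq_of_norm_eq hw hw0]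
      field_simp
      ring

theorem hasDerivAt_div_mul_sub_sq {c z w : ℂ} (hc : c ≠ 0) (hw : w ≠ z) :
    HasDerivAt (fun u => u / (c * (u - z) ^ 2)) (-(w + z) / (c * (w - z) ^ 3)) w := by
  have hwz : w - z ≠ 0 := sub_ne_zero.mpr hw
  refine ((hasDerivAt_id' w).div ((((hasDerivAt_id' w).sub_const z).fun_pow 2).const_mul c)
    (mul_ne_zero hc (pow_ne_zero 2 hwz))).congr_deriv ?_
  field_simp
  ring

theorem integral_inv_norm_circleMap_sub_pow_four {z : ℂ} {r : ℝ} (hr : 0 < r) (hrz : r < ‖z‖) :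
    ∫ θ in 0..2 * π, (‖circleMap 0 r θ - z‖ ^ 4)⁻¹ =
      2 * π * (r ^ 2 + ‖z‖ ^ 2) / (‖z‖ ^ 2 - r ^ 2) ^ 3 := by
  have hz : 0 < ‖z‖ := hr.trans hrz
  have hzc : conj z ≠ 0 := by simpa [← norm_pos_iff] using hz
  set w₀ : ℂ := r ^ 2 / conj z
  have hw₀ : w₀ ∈ ball 0 r := by
    rw [mem_ball_zero_iff, norm_div, Complex.norm_conj, norm_pow, Complex.norm_real,
      Real.norm_of_nonneg hr.le, div_lt_iff₀ hz]
    nlinarith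
  have hw₀z : w₀ ≠ z := fun h => by
    rw [h, mem_ball_zero_iff] at hw₀; linarith
  set g : ℂ → ℂ := fun u => u / (conj z ^ 2 * (u - z) ^ 2)
  have hg : DifferentiableOn ℂ g (ball 0 ‖z‖) :=
    fun u hu => (hasDerivAt_div_mul_sub_sq (pow_ne_zero 2 hzc)
      (ne_of_mem_of_not_mem hu (by simp))).differentiableAt.differentiableWithinAt
  have hderiv : deriv g w₀ = (((r ^ 2 + ‖z‖ ^ 2) / (‖z‖ ^ 2 - r ^ 2) ^ 3 : ℝ) : ℂ) := by
    have hzz : z * conj z = (‖z‖ : ℂ) ^ 2 := by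
      rw [Complex.mul_conj, Complex.normSq_eq_norm_sq]; push_cast; ring
    have hsum : w₀ + z = (r ^ 2 + ‖z‖ ^ 2) / conj z := by
      simp only [w₀]; rw [← hzz]; field_simp
    have hdiff : w₀ - z = -((‖z‖ ^ 2 - r ^ 2) / conj z) := by
      simp only [w₀]; rw [← hzz]; field_simp; ring
    have hsr : (‖z‖ : ℂ) ^ 2 - r ^ 2 ≠ 0 := by norm_cast; nlinarith
    rw [(hasDerivAt_div_mul_sub_sq (pow_ne_zero 2 hzc) hw₀z).deriv, hsum, hdiff]
    push_cast
    field_simp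
  set J := ∫ θ in 0..2 * π, (‖circleMap 0 r θ - z‖ ^ 4)⁻¹
  have hcircle : (∮ w in C(0, r), ((w - w₀) ^ 2)⁻¹ • g w) = Complex.I * J := by
    have hintegrand : ∀ θ : ℝ, deriv (circleMap 0 r) θ •
        ((circleMap 0 r θ - w₀) ^ 2)⁻¹ • g (circleMap 0 r θ) =
          Complex.I * (((‖circleMap 0 r θ - z‖ ^ 4)⁻¹ : ℝ) : ℂ) := fun θ => by
      have hw : ‖circleMap 0 r θ‖ = r := by rw [norm_circleMap_zero, abs_of_pos hr]
      rw [deriv_circleMap, ofReal_inv_norm_sub_pow_four_of_norm_eq hr hw hrz]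
      simp only [g, smul_eq_mul, div_eq_mul_inv, mul_inv]
      ring
    simp_rw [circleIntegral, hintegrand, intervalIntegral.integral_const_mul,
      intervalIntegral.integral_ofReal]
    rfl
  have cauchy := Complex.two_pi_I_inv_smul_circleIntegral_sub_sq_inv_smul_of_differentiable
    isOpen_ball (closedBall_subset_ball hrz) hg hw₀
  rw [hcircle, hderiv, smul_eq_mul] at cauchy
  apply Complex.ofReal_injective
  rw [mul_div_assoc, Complex.ofReal_mul, ← cauchy]
  push_cast
  field_simp

theorem sub_lt_norm_sub_of_mem_ball {w z : ℂ} {R : ℝ} (hw : w ∈ ball (0 : ℂ) R) :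
    ‖z‖ - R < ‖w - z‖ := by
  rw [mem_ball_zero_iff] at hw
  linarith [norm_sub_norm_le z w, norm_sub_rev z w]

theorem setIntegral_ball_inv_norm_sub_pow_four {z : ℂ} {R : ℝ} (hR : 0 ≤ R) (hRz : R < ‖z‖) :
    ∫ w in ball (0 : ℂ) R, (‖w - z‖ ^ 4)⁻¹ = π * R ^ 2 / (‖z‖ ^ 2 - R ^ 2) ^ 2 := by
  have hbound : ∀ w ∈ ball (0 : ℂ) R, ‖(‖w - z‖ ^ 4)⁻¹‖ ≤ ((‖z‖ - R) ^ 4)⁻¹ := fun w hw => by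
    rw [Real.norm_of_nonneg (by positivity)]
    exact inv_anti₀ (pow_pos (by linarith) 4)
      (pow_le_pow_left₀ (by linarith) (sub_lt_norm_sub_of_mem_ball hw).le 4)
  rw [setIntegral_ball_eq_intervalIntegral_circleMap (by fun_prop : Measurable _).stronglyMeasurable
    hR hbound]
  have hcircle : ∀ r ∈ uIcc 0 R, r • ∫ θ in 0..2 * π, (‖circleMap 0 r θ - z‖ ^ 4)⁻¹ =
      r * (2 * π * (r ^ 2 + ‖z‖ ^ 2) / (‖z‖ ^ 2 - r ^ 2) ^ 3) := fun r hr => by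
    rw [uIcc_of_le hR] at hr
    rcases hr.1.eq_or_lt with rfl | hr0
    · simp
    · rw [smul_eq_mul, integral_inv_norm_circleMap_sub_pow_four hr0 (hr.2.trans_lt hRz)]
  have hne : ∀ r ∈ uIcc 0 R, ‖z‖ ^ 2 - r ^ 2 ≠ 0 := fun r hr => by
    rw [uIcc_of_le hR] at hr
    nlinarith [hr.1, hr.2]
  have hderiv : ∀ r ∈ uIcc 0 R, HasDerivAt (fun r => π * r ^ 2 / (‖z‖ ^ 2 - r ^ 2) ^ 2)
      (r * (2 * π * (r ^ 2 + ‖z‖ ^ 2) / (‖z‖ ^ 2 - r ^ 2) ^ 3)) r := fun r hr => by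
    have := hne r hr
    refine ((hasDerivAt_pow 2 r |>.const_mul π).div ((hasDerivAt_pow 2 r).const_sub _ |>.fun_pow 2)
      (pow_ne_zero 2 this)).congr_deriv ?_
    field_simp
    ring
  rw [intervalIntegral.integral_congr hcircle, intervalIntegral.integral_eq_sub_of_hasDerivAt
    hderiv (ContinuousOn.intervalIntegrable ?_)]
  · simp
  · exact continuousOn_id.mul <| ContinuousOn.div (by fun_prop) (by fun_prop)
      fun r hr => pow_ne_zero 3 (hne r hr)

theorem sq_norm_setIntegral_div_sub_pow_four_le {μ : ℂ → ℂ} {z : ℂ} {R : ℝ} (hR : 0 ≤ R)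
    (hRz : R < ‖z‖) (hμ : MemLp μ 2 (volume.restrict (ball 0 R))) :
    ‖∫ w in ball (0 : ℂ) R, μ w / (w - z) ^ 4‖ ^ 2 ≤
      (∫ w in ball (0 : ℂ) R, ‖μ w‖ ^ 2 / ‖w - z‖ ^ 4) * (π * R ^ 2 / (‖z‖ ^ 2 - R ^ 2) ^ 2) := by
  set ν := volume.restrict (ball (0 : ℂ) R)
  have : IsFiniteMeasure ν := isFiniteMeasure_restrict.2 measure_ball_lt_top.ne
  set k : ℂ → ℂ := fun w => ((w - z) ^ 2)⁻¹
  have hk : MemLp k ⊤ ν := by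
    refine memLp_top_of_bound (by fun_prop : Measurable k).aestronglyMeasurable
      ((‖z‖ - R) ^ 2)⁻¹ ((ae_restrict_iff' measurableSet_ball).2 (.of_forall fun w hw => ?_))
    rw [norm_inv, norm_pow]
    exact inv_anti₀ (pow_pos (by linarith) 2)
      (pow_le_pow_left₀ (by linarith) (sub_lt_norm_sub_of_mem_ball hw).le 2)
  have hcs := sq_norm_integral_mul_le (hk.mul' hμ) (hk.mono_exponent le_top)
  have hprod : ∀ w, μ w * k w * k w = μ w / (w - z) ^ 4 := fun w => by
    rw [mul_assoc, ← mul_inv, ← pow_add, div_eq_mul_inv]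
  have hnorm_prod : ∀ w, ‖μ w * k w‖ ^ 2 = ‖μ w‖ ^ 2 / ‖w - z‖ ^ 4 := fun w => by
    rw [norm_mul, norm_inv, norm_pow]; ring
  have hnorm_k : ∀ w, ‖k w‖ ^ 2 = (‖w - z‖ ^ 4)⁻¹ := fun w => by
    rw [norm_inv, norm_pow]; ring
  simp only [hprod, hnorm_prod, hnorm_k] at hcs
  rwa [setIntegral_ball_inv_norm_sub_pow_four hR hRz] at hcs

/-- Pointwise Cauchy–Schwarz estimate for the derivative of the Bers projection:
if `μ` is measurable and essentially bounded on the unit disk `𝔻` and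
`φ(z) = -(6/π) ∫_𝔻 μ(w)/(w - z)⁴ dA(w)` for `z ∈ 𝔻*`, then for every `z` with `|z| > 1`,
`|φ(z)|² (|z|² - 1)³ ≤ (36/π) (|z|² - 1) ∫_𝔻 |μ(w)|²/|w - z|⁴ dA(w)`. -/
theorem pointwise_estimate_Bers_projection_derivative
    (μ : ℂ → ℂ) (hmeas : Measurable μ)
    (hbdd : eLpNorm μ ⊤ (volume.restrict {w : ℂ | ‖w‖ < 1}) < ⊤)
    (φ : ℂ → ℂ)
    (hφ : ∀ z : ℂ, 1 < ‖z‖ →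
      φ z = -(6 / (Real.pi : ℂ)) * ∫ w in {w : ℂ | ‖w‖ < 1}, μ w / (w - z) ^ 4)
    (z : ℂ) (hz : 1 < ‖z‖) :
    ‖φ z‖ ^ 2 * (‖z‖ ^ 2 - 1) ^ 3 ≤
      (36 / Real.pi) * (‖z‖ ^ 2 - 1) *
        ∫ w in {w : ℂ | ‖w‖ < 1},
          ‖μ w‖ ^ 2 / ‖w - z‖ ^ 4 := by
  have hball : {w : ℂ | ‖w‖ < 1} = ball 0 1 := by ext; simp
  rw [hball] at hbdd hφ ⊢
  have : IsFiniteMeasure (volume.restrict (ball (0 : ℂ) 1)) :=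
    isFiniteMeasure_restrict.2 measure_ball_lt_top.ne
  have hμ : MemLp μ 2 (volume.restrict (ball 0 1)) :=
    MemLp.mono_exponent ⟨hmeas.aestronglyMeasurable, hbdd⟩ le_top
  have hnorm : ‖φ z‖ = 6 / π * ‖∫ w in ball (0 : ℂ) 1, μ w / (w - z) ^ 4‖ := by
    rw [hφ z hz, norm_mul, norm_neg, norm_div, Complex.norm_real, Real.norm_of_nonneg pi_pos.le]
    norm_num
  have hz1 : 0 < ‖z‖ ^ 2 - 1 := by nlinarith
  calc ‖φ z‖ ^ 2 * (‖z‖ ^ 2 - 1) ^ 3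
      ≤ (6 / π) ^ 2 * ((∫ w in ball (0 : ℂ) 1, ‖μ w‖ ^ 2 / ‖w - z‖ ^ 4) *
          (π * 1 ^ 2 / (‖z‖ ^ 2 - 1 ^ 2) ^ 2)) * (‖z‖ ^ 2 - 1) ^ 3 := by
        rw [hnorm, mul_pow]
        gcongr
        exact sq_norm_setIntegral_div_sub_pow_four_le zero_le_one hz hμ
    _ = 36 / π * (‖z‖ ^ 2 - 1) * ∫ w in ball (0 : ℂ) 1, ‖μ w‖ ^ 2 / ‖w - z‖ ^ 4 := by
        field_simp
        ring
end

section
/- Let E be a real or complex Banach space, F ⊆ E a closed linear subspace, and U ⊆ E an open set that is saturated under F, i.e., U + F ⊆ U. Let π : E → E⧸F be the quotient map onto the quotient Banach space. Let f : E → E be Fréchet differentiable at every point of U with f(x) − f(y) ∈ F whenever x, y ∈ U and x − y ∈ F. Then: (i) there is a well-defined map f̂ : π(U) → E⧸F with f̂(π(x)) = π(f(x)) for x ∈ U; (ii) for each x ∈ U, the derivative Df(x) maps F into F, so it induces a continuous linear operator A_x : E⧸F → E⧸F with A_x ∘ π = π ∘ Df(x) and operator norm ‖A_x‖ ≤ ‖Df(x)‖;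 and (iii) f̂ is Fréchet differentiable at π(x) with derivative A_x, for every x ∈ U. -/
/-- Content of the proof of Corollary 5.4: a map `f` on a Banach space `E`, differentiable on
an `F`-saturated open set `U` and compatible with a closed subspace `F` (i.e.
`f x - f y ∈ F` whenever `x - y ∈ F`), descends to a map `f̂` on the quotient Banach space
`E ⧸ F` with `f̂ ∘ π = π ∘ f` on `U`; moreover each derivative `Df(x)` maps `F` into `F` and
induces a continuous linear operator `A_x` on `E ⧸ F` with `A_x ∘ π = π ∘ Df(x)` and
`‖A_x‖ ≤ ‖Df(x)‖`, and `f̂` is Fréchet differentiable at `π x` with derivative `A_x`. -/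
theorem quotient_map_fderiv
    {𝕜 : Type*} [RCLike 𝕜] {E : Type*} [NormedAddCommGroup E] [NormedSpace 𝕜 E]
    [CompleteSpace E]
    (F : Submodule 𝕜 E) (hFc : IsClosed (F : Set E))
    (U : Set E) (hU : IsOpen U) (hsat : ∀ x ∈ U, ∀ u ∈ F, x + u ∈ U)
    (f : E → E) (hdiff : ∀ x ∈ U, DifferentiableAt 𝕜 f x)
    (hcomp : ∀ x ∈ U, ∀ y ∈ U, x - y ∈ F → f x - f y ∈ F) :
    letI : NormedAddCommGroup (E ⧸ F) := Submodule.Quotient.normedAddCommGroup F (hS := hFc)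
    letI : NormedSpace 𝕜 (E ⧸ F) := Submodule.Quotient.normedSpace F 𝕜
    ∃ fhat : E ⧸ F → E ⧸ F,
      (∀ x ∈ U, fhat (Submodule.Quotient.mk x) = Submodule.Quotient.mk (f x)) ∧
      ∀ x ∈ U,
        (∀ v ∈ F, fderiv 𝕜 f x v ∈ F) ∧
        ∃ A : (E ⧸ F) →L[𝕜] (E ⧸ F),
          (∀ v : E, A (Submodule.Quotient.mk v) = Submodule.Quotient.mk (fderiv 𝕜 f x v)) ∧
          ‖A‖ ≤ ‖fderiv 𝕜 f x‖ ∧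
          HasFDerivAt fhat A (Submodule.Quotient.mk x) := by
  letI : NormedAddCommGroup (E ⧸ F) := Submodule.Quotient.normedAddCommGroup F (hS := hFc)
  letI : NormedSpace 𝕜 (E ⧸ F) := Submodule.Quotient.normedSpace F 𝕜
  classical
  have key : ∀ x ∈ U, ∀ y ∈ U, (Submodule.Quotient.mk x : E ⧸ F) = Submodule.Quotient.mk y →
      (Submodule.Quotient.mk (f x) : E ⧸ F) = Submodule.Quotient.mk (f y) := by
    intro x hx y hy hxy
    rw [Submodule.Quotient.eq] at hxy ⊢
    exact hcomp x hx y hy hxy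
  set fhat : E ⧸ F → E ⧸ F := fun q =>
    if h : ∃ z, z ∈ U ∧ (Submodule.Quotient.mk z : E ⧸ F) = q
    then Submodule.Quotient.mk (f h.choose) else 0 with hfhat_def
  have hfhat : ∀ z ∈ U, fhat (Submodule.Quotient.mk z) = Submodule.Quotient.mk (f z) := by
    intro z hz
    have h : ∃ y, y ∈ U ∧ (Submodule.Quotient.mk y : E ⧸ F) = Submodule.Quotient.mk z :=
      ⟨z, hz, rfl⟩
    rw [hfhat_def]
    simp only [dif_pos h]
    exact key _ h.choose_spec.1 z hz h.choose_spec.2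
  refine ⟨fhat, hfhat, ?_⟩
  intro x hx
  have hL : HasFDerivAt f (fderiv 𝕜 f x) x := (hdiff x hx).hasFDerivAt
  have hmap : ∀ v ∈ F, fderiv 𝕜 f x v ∈ F := by
    intro v hv
    have h1 : HasDerivAt (fun t : 𝕜 => x + t • v) v 0 := by
      simpa using ((hasDerivAt_id (0 : 𝕜)).smul_const v).const_add x
    have hL' : HasFDerivAt f (fderiv 𝕜 f x) ((fun t : 𝕜 => x + t • v) 0) := by
      simpa using hL
    have hline : HasDerivAt (fun t : 𝕜 => f (x + t • v)) (fderiv 𝕜 f x v) 0 :=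
      hL'.comp_hasDerivAt 0 h1
    rw [hasDerivAt_iff_tendsto_slope] at hline
    refine hFc.mem_of_tendsto hline ?_
    filter_upwards [self_mem_nhdsWithin] with t ht
    have htv : t • v ∈ F := F.smul_mem t hv
    have hxU : x + t • v ∈ U := hsat x hx _ htv
    have hmem : f (x + t • v) - f (x + (0 : 𝕜) • v) ∈ F := by
      have : (x + t • v) - x ∈ F := by simpa using htv
      simpa using hcomp _ hxU x hx this
    have : (t - 0)⁻¹ • (f (x + t • v) - f (x + (0 : 𝕜) • v)) ∈ F := F.smul_mem _ hmem
    simpa [slope_def_module] using this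
  refine ⟨hmap, ?_⟩
  -- the induced linear map on the quotient
  have hker : F ≤ LinearMap.ker (F.mkQ.comp (fderiv 𝕜 f x : E →ₗ[𝕜] E)) := by
    intro v hv
    simp only [LinearMap.mem_ker, LinearMap.comp_apply, Submodule.mkQ_apply,
      Submodule.Quotient.mk_eq_zero]
    exact hmap v hv
  set A₀ : E ⧸ F →ₗ[𝕜] E ⧸ F := F.liftQ (F.mkQ.comp (fderiv 𝕜 f x : E →ₗ[𝕜] E)) hker with hA₀def
  have hA₀ : ∀ v : E, A₀ (Submodule.Quotient.mk v)
      = Submodule.Quotient.mk (fderiv 𝕜 f x v) := fun v => rfl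
  have hbound : ∀ q : E ⧸ F, ‖A₀ q‖ ≤ ‖fderiv 𝕜 f x‖ * ‖q‖ := by
    intro q
    refine le_of_forall_pos_le_add fun ε hε => ?_
    have hδ : 0 < ε / (‖fderiv 𝕜 f x‖ + 1) := by positivity
    obtain ⟨m, hm, hmn⟩ := Submodule.Quotient.norm_mk_lt q hδ
    have h1 : ‖A₀ q‖ ≤ ‖fderiv 𝕜 f x m‖ := by
      rw [← hm, hA₀]
      exact Submodule.Quotient.norm_mk_le F _
    have h2 : ‖fderiv 𝕜 f x m‖ ≤ ‖fderiv 𝕜 f x‖ * ‖m‖ := (fderiv 𝕜 f x).le_opNorm m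
    have h3 : ‖fderiv 𝕜 f x‖ * (ε / (‖fderiv 𝕜 f x‖ + 1)) ≤ ε := by
      rw [div_eq_inv_mul, ← mul_assoc]
      have hpos : (0 : ℝ) < ‖fderiv 𝕜 f x‖ + 1 := by positivity
      have : ‖fderiv 𝕜 f x‖ * (‖fderiv 𝕜 f x‖ + 1)⁻¹ ≤ 1 := by
        rw [← div_eq_mul_inv, div_le_one hpos]; linarith
      nlinarith
    have hLnn : (0 : ℝ) ≤ ‖fderiv 𝕜 f x‖ := norm_nonneg _
    nlinarith [h1, h2, hmn]
  set A : (E ⧸ F) →L[𝕜] (E ⧸ F) := A₀.mkContinuous ‖fderiv 𝕜 f x‖ hbound with hAdef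
  have hA : ∀ v : E, A (Submodule.Quotient.mk v)
      = Submodule.Quotient.mk (fderiv 𝕜 f x v) := fun v => hA₀ v
  refine ⟨A, hA, A₀.mkContinuous_norm_le (norm_nonneg _) hbound, ?_⟩
  -- differentiability of fhat at mk x
  rw [hasFDerivAt_iff_isLittleO_nhds_zero, Asymptotics.isLittleO_iff]
  intro c hc
  have hlittle : (fun h : E => f (x + h) - f x - fderiv 𝕜 f x h) =o[nhds 0] fun h => h :=
    hasFDerivAt_iff_isLittleO_nhds_zero.1 hL
  have h2 := Asymptotics.isLittleO_iff.1 hlittle (show (0 : ℝ) < c / 2 by linarith)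
  rw [Metric.eventually_nhds_iff] at h2
  obtain ⟨δ₁, hδ₁, hsmall⟩ := h2
  obtain ⟨δ₂, hδ₂, hball⟩ := Metric.isOpen_iff.1 hU x hx
  rw [Metric.eventually_nhds_iff]
  refine ⟨min δ₁ δ₂ / 2, by positivity, ?_⟩
  intro w hw
  rw [dist_zero_right] at hw
  by_cases hw0 : w = 0
  · simp [hw0, hfhat x hx]
  · have hwpos : 0 < ‖w‖ := norm_pos_iff.2 hw0
    obtain ⟨m, hm, hmn⟩ := Submodule.Quotient.norm_mk_lt w hwpos
    have hmlt : ‖m‖ < min δ₁ δ₂ := by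
      have : ‖m‖ < 2 * ‖w‖ := by linarith
      linarith
    have hmδ₁ : ‖m‖ < δ₁ := lt_of_lt_of_le hmlt (min_le_left _ _)
    have hmδ₂ : ‖m‖ < δ₂ := lt_of_lt_of_le hmlt (min_le_right _ _)
    have hmU : x + m ∈ U := by
      apply hball
      rw [Metric.mem_ball, dist_eq_norm]
      simpa using hmδ₂
    have e1 : (Submodule.Quotient.mk x : E ⧸ F) + w = Submodule.Quotient.mk (x + m) := by
      rw [← hm, ← Submodule.Quotient.mk_add]
    have e2 : fhat (Submodule.Quotient.mk x + w) = Submodule.Quotient.mk (f (x + m)) := by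
      rw [e1]; exact hfhat _ hmU
    have e3 : A w = Submodule.Quotient.mk (fderiv 𝕜 f x m) := by rw [← hm]; exact hA m
    have e4 : fhat (Submodule.Quotient.mk x + w) - fhat (Submodule.Quotient.mk x) - A w
        = Submodule.Quotient.mk (f (x + m) - f x - fderiv 𝕜 f x m) := by
      rw [e2, hfhat x hx, e3, ← Submodule.Quotient.mk_sub, ← Submodule.Quotient.mk_sub]
    have hbnd : ‖f (x + m) - f x - fderiv 𝕜 f x m‖ ≤ c / 2 * ‖m‖ := by
      have := hsmall (y := m) (by rw [dist_zero_right]; exact hmδ₁)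
      simpa using this
    calc ‖fhat (Submodule.Quotient.mk x + w) - fhat (Submodule.Quotient.mk x) - A w‖
        ≤ ‖f (x + m) - f x - fderiv 𝕜 f x m‖ := by
          rw [e4]; exact Submodule.Quotient.norm_mk_le F _
      _ ≤ c / 2 * ‖m‖ := hbnd
      _ ≤ c * ‖w‖ := by nlinarith
end

section
/- Let λ : 𝔻 → [0,∞] be a measurable density on the unit disk with finite Carleson norm ‖λ‖_c and satisfying the vanishing Carleson condition: (1/r)·∫_{B(ζ,r) ∩ 𝔻} λ dA → 0 as r → 0, uniformly in ζ ∈ 𝕊. For 0 < s < 1 let A_s = {z : 1 − s < |z| < 1} be the boundary annulus and let λ·1_{A_s} denote the restriction of λ to A_s. Then ‖λ·1_{A_s}‖_c → 0 as s → 0. -/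
/-!
Fix `ε > 0` and take `r₀` from the vanishing condition. On balls of radius `r < r₀` the averages
of `λ`, and a fortiori of its truncation, are below `ε`. On balls of radius `r ≥ r₀` the average
of `λ·1_{A_s}` is at most `(1/r₀) ∫_{A_s} λ`, and this tends to `0`: the two disks `B(±1, 3/2)`
cover `𝔻`, so `∫_𝔻 λ ≤ 3‖λ‖_c < ∞`, and the annuli `A_s` decrease to the empty set.
-/

open MeasureTheory

/-- The Carleson norm of a density `λ : 𝔻 → [0,∞]` on the unit disk:
`‖λ‖_c = sup {(1/r) ∫_{B(ζ,r) ∩ 𝔻} λ dA : |ζ| = 1, 0 < r < 2}`. -/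
noncomputable def carlesonNormDisk (lam : ℂ → ENNReal) : ENNReal :=
  ⨆ (ζ : ℂ) (_ : ‖ζ‖ = 1) (r : ℝ) (_ : 0 < r) (_ : r < 2),
    ENNReal.ofReal (1 / r) * ∫⁻ z in Metric.ball ζ r ∩ {w : ℂ | ‖w‖ < 1}, lam z

open Filter Set Topology ENNReal

lemma isOpen_annulus (s : ℝ) : IsOpen {z : ℂ | 1 - s < ‖z‖ ∧ ‖z‖ < 1} :=
  (isOpen_lt continuous_const continuous_norm).inter (isOpen_lt continuous_norm continuous_const)

lemma tendsto_measure_annulus_zero (μ : Measure ℂ) (hμ : μ {w : ℂ | ‖w‖ < 1} ≠ ∞) :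
    Tendsto (fun s : ℝ => μ {z : ℂ | 1 - s < ‖z‖ ∧ ‖z‖ < 1}) (𝓝[>] 0) (𝓝 0) := by
  have hempty : (⋂ s > (0 : ℝ), {z : ℂ | 1 - s < ‖z‖ ∧ ‖z‖ < 1}) = ∅ := by
    refine eq_empty_of_forall_notMem fun z hz => ?_
    simp only [mem_iInter, mem_ofPred] at hz
    have hz1 : ‖z‖ < 1 := (hz 1 one_pos).2
    linarith [(hz (1 - ‖z‖) (by linarith)).1]
  have h := tendsto_measure_biInter_gt (μ := μ) (a := (0 : ℝ))
    (s := fun s => {z : ℂ | 1 - s < ‖z‖ ∧ ‖z‖ < 1})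
    (fun s _ => (isOpen_annulus s).measurableSet.nullMeasurableSet)
    (fun _ _ _ hij _ hz => ⟨by linarith [hz.1], hz.2⟩)
    ⟨1, one_pos, ne_top_of_le_ne_top hμ (measure_mono fun _ hz => hz.2)⟩
  rwa [hempty, measure_empty] at h

lemma unitDisk_subset_ball_one_union_ball_neg_one :
    {w : ℂ | ‖w‖ < 1} ⊆ Metric.ball 1 (3 / 2) ∪ Metric.ball (-1) (3 / 2) := by
  have hright : ∀ v : ℂ, ‖v‖ < 1 → 0 ≤ v.re → ‖v - 1‖ < 3 / 2 := by
    intro v hv hre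
    have hv2 : ‖v‖ ^ 2 = v.re ^ 2 + v.im ^ 2 := by
      rw [Complex.sq_norm, Complex.normSq_apply]; ring
    have hsq : ‖v - 1‖ ^ 2 < 2 := by
      rw [Complex.sq_norm, Complex.normSq_apply]
      simp only [Complex.sub_re, Complex.sub_im, Complex.one_re, Complex.one_im]
      nlinarith [norm_nonneg v]
    nlinarith [norm_nonneg (v - 1)]
  intro w hw
  rw [mem_ofPred] at hw
  rcases le_total 0 w.re with hre | hre
  · exact Or.inl (by simpa [Complex.dist_eq] using hright w hw hre)
  · refine Or.inr ?_
    have h := hright (-w) (by rwa [norm_neg]) (by simpa using hre)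
    rwa [show -w - 1 = -(w - -1) by ring, norm_neg, ← Complex.dist_eq] at h

section CarlesonNorm

variable {lam : ℂ → ℝ≥0∞}

lemma le_carlesonNormDisk {ζ : ℂ} (hζ : ‖ζ‖ = 1) {r : ℝ} (hr0 : 0 < r) (hr2 : r < 2) :
    ENNReal.ofReal (1 / r) * ∫⁻ z in Metric.ball ζ r ∩ {w : ℂ | ‖w‖ < 1}, lam z
      ≤ carlesonNormDisk lam :=
  le_iSup_of_le ζ <| le_iSup_of_le hζ <| le_iSup_of_le r <| le_iSup_of_le hr0 <|
    le_iSup_of_le hr2 le_rfl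

lemma setLIntegral_ball_inter_unitDisk_le {ζ : ℂ} (hζ : ‖ζ‖ = 1) {r : ℝ} (hr0 : 0 < r)
    (hr2 : r < 2) :
    ∫⁻ z in Metric.ball ζ r ∩ {w : ℂ | ‖w‖ < 1}, lam z
      ≤ ENNReal.ofReal r * carlesonNormDisk lam :=
  calc ∫⁻ z in Metric.ball ζ r ∩ {w : ℂ | ‖w‖ < 1}, lam z
      = ENNReal.ofReal r * (ENNReal.ofReal (1 / r) *
          ∫⁻ z in Metric.ball ζ r ∩ {w : ℂ | ‖w‖ < 1}, lam z) := by
        rw [← mul_assoc, ← ENNReal.ofReal_mul hr0.le, mul_one_div_cancel hr0.ne',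
          ENNReal.ofReal_one, one_mul]
    _ ≤ ENNReal.ofReal r * carlesonNormDisk lam := by
        gcongr; exact le_carlesonNormDisk hζ hr0 hr2

lemma setLIntegral_unitDisk_le_carlesonNormDisk :
    ∫⁻ z in {w : ℂ | ‖w‖ < 1}, lam z ≤ 3 * carlesonNormDisk lam := by
  calc ∫⁻ z in {w : ℂ | ‖w‖ < 1}, lam z
      ≤ ∫⁻ z in (Metric.ball 1 (3 / 2) ∩ {w : ℂ | ‖w‖ < 1}) ∪
          (Metric.ball (-1) (3 / 2) ∩ {w : ℂ | ‖w‖ < 1}), lam z := by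
        refine lintegral_mono_set fun w hw => ?_
        rcases unitDisk_subset_ball_one_union_ball_neg_one hw with h | h
        exacts [Or.inl ⟨h, hw⟩, Or.inr ⟨h, hw⟩]
    _ ≤ (∫⁻ z in Metric.ball 1 (3 / 2) ∩ {w : ℂ | ‖w‖ < 1}, lam z)
          + ∫⁻ z in Metric.ball (-1) (3 / 2) ∩ {w : ℂ | ‖w‖ < 1}, lam z :=
        lintegral_union_le lam _ _
    _ ≤ ENNReal.ofReal (3 / 2) * carlesonNormDisk lam
          + ENNReal.ofReal (3 / 2) * carlesonNormDisk lam := by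
        gcongr <;> exact setLIntegral_ball_inter_unitDisk_le (by simp) (by norm_num) (by norm_num)
    _ = 3 * carlesonNormDisk lam := by
        rw [← add_mul, ← ENNReal.ofReal_add (by norm_num) (by norm_num)]
        norm_num

lemma tendsto_setLIntegral_annulus_zero (hfin : carlesonNormDisk lam ≠ ⊤) :
    Tendsto (fun s : ℝ => ∫⁻ z in {z : ℂ | 1 - s < ‖z‖ ∧ ‖z‖ < 1}, lam z) (𝓝[>] 0) (𝓝 0) := by
  have hD : MeasurableSet {w : ℂ | ‖w‖ < 1} :=
    (isOpen_lt continuous_norm continuous_const).measurableSet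
  refine (tendsto_measure_annulus_zero (volume.withDensity lam) ?_).congr fun s =>
    withDensity_apply _ (isOpen_annulus s).measurableSet
  rw [withDensity_apply _ hD]
  exact ne_top_of_le_ne_top (mul_ne_top ofNat_ne_top hfin)
    setLIntegral_unitDisk_le_carlesonNormDisk

lemma carlesonNormDisk_indicator_le {A : Set ℂ} (hA : MeasurableSet A) {t : ℝ} (ht : 0 < t)
    {ε : ℝ≥0∞} (hsmall : ∀ ζ : ℂ, ‖ζ‖ = 1 → ∀ r : ℝ, 0 < r → r < t →
      ENNReal.ofReal (1 / r) * ∫⁻ z in Metric.ball ζ r ∩ {w : ℂ | ‖w‖ < 1}, lam z ≤ ε) :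
    carlesonNormDisk (A.indicator lam) ≤ max ε (ENNReal.ofReal (1 / t) * ∫⁻ z in A, lam z) := by
  refine iSup_le fun ζ => iSup_le fun hζ => iSup_le fun r => iSup_le fun hr0 => iSup_le fun _ => ?_
  rcases lt_or_ge r t with hrt | htr
  · refine le_max_of_le_left (le_trans ?_ (hsmall ζ hζ r hr0 hrt))
    gcongr
    exact indicator_le_self A lam _
  · refine le_max_of_le_right ?_
    gcongr ?_ * ?_
    · exact ENNReal.ofReal_le_ofReal (one_div_le_one_div_of_le ht htr)
    · rw [lintegral_indicator hA, Measure.restrict_restrict hA]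
      exact lintegral_mono_set inter_subset_left

end CarlesonNorm

theorem vanishing_carleson_truncation_tendsto_zero_general
    (lam : ℂ → ENNReal)
    (hfin : carlesonNormDisk lam ≠ ⊤)
    (hvan : ∀ ε : ENNReal, 0 < ε → ∃ r₀ : ℝ, 0 < r₀ ∧
      ∀ ζ : ℂ, ‖ζ‖ = 1 → ∀ r : ℝ, 0 < r → r < r₀ →
        ENNReal.ofReal (1 / r) *
          ∫⁻ z in Metric.ball ζ r ∩ {w : ℂ | ‖w‖ < 1}, lam z < ε) :
    Filter.Tendsto
      (fun s : ℝ => carlesonNormDisk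
        (Set.indicator {z : ℂ | 1 - s < ‖z‖ ∧ ‖z‖ < 1} lam))
      (nhdsWithin 0 (Set.Ioi 0)) (nhds 0) := by
  rw [ENNReal.tendsto_nhds_zero]
  intro ε hε
  obtain ⟨r₀, hr₀, hsmall⟩ := hvan ε hε
  have hmass : Tendsto (fun s : ℝ => ENNReal.ofReal (1 / r₀) *
      ∫⁻ z in {z : ℂ | 1 - s < ‖z‖ ∧ ‖z‖ < 1}, lam z) (𝓝[>] 0) (𝓝 0) := by
    simpa using ENNReal.Tendsto.const_mul (tendsto_setLIntegral_annulus_zero hfin)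
      (Or.inr ofReal_ne_top)
  filter_upwards [ENNReal.tendsto_nhds_zero.1 hmass ε hε] with s hs
  exact (carlesonNormDisk_indicator_le (isOpen_annulus s).measurableSet hr₀
    fun ζ hζ r hr0 hr => (hsmall ζ hζ r hr0 hr).le).trans (max_le le_rfl hs)

/-- Key approximation step in the proof of Theorem 5.1: if `λ` is a measurable density on the
unit disk with finite Carleson norm satisfying the vanishing Carleson condition
(`(1/r) ∫_{B(ζ,r) ∩ 𝔻} λ dA → 0` as `r → 0`, uniformly in `ζ ∈ 𝕊`), then the Carleson norm
of the restriction of `λ` to the boundary annulus `A_s = {1 - s < |z| < 1}` tends to `0`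
as `s → 0⁺`. -/
theorem vanishing_carleson_truncation_tendsto_zero
    (lam : ℂ → ENNReal) (hmeas : Measurable lam)
    (hfin : carlesonNormDisk lam ≠ ⊤)
    (hvan : ∀ ε : ENNReal, 0 < ε → ∃ r₀ : ℝ, 0 < r₀ ∧
      ∀ ζ : ℂ, ‖ζ‖ = 1 → ∀ r : ℝ, 0 < r → r < r₀ →
        ENNReal.ofReal (1 / r) *
          ∫⁻ z in Metric.ball ζ r ∩ {w : ℂ | ‖w‖ < 1}, lam z < ε) :
    Filter.Tendsto
      (fun s : ℝ => carlesonNormDisk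
        (Set.indicator {z : ℂ | 1 - s < ‖z‖ ∧ ‖z‖ < 1} lam))
      (nhdsWithin 0 (Set.Ioi 0)) (nhds 0) :=
  vanishing_carleson_truncation_tendsto_zero_general lam hfin hvan
end

section
/- Let (X, d) be a metric space on which the isometries act transitively: for all x, y ∈ X there is a bijective map g : X → X with d(g(a), g(b)) = d(a, b) for all a, b and g(x) = y. Suppose there exist a Banach space E, a point x₀ ∈ X, constants δ > 0, ρ > 0, K ≥ 1, and a map β : X → E with β(x₀) = 0 such that: (i) K^{-1}·‖β(x) − β(y)‖ ≤ d(x, y) ≤ K·‖β(x) − β(y)‖ for all x, y in the open ball B_d(x₀, δ); and (ii) every v ∈ E with ‖v‖ < ρ satisfies v = β(x) for some x ∈ B_d(x₀, δ). Then the metric space (X, d) is complete. -/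
/-- Abstract completeness argument of Theorem 7.4: a metric space `X` with a transitive
group of isometries, admitting a map `β` into a Banach space `E` that is bi-Lipschitz
(with constant `K`) between a ball `B(x₀, δ)` and the norm, whose image contains the
norm-ball of radius `ρ`, is complete. -/
theorem complete_of_transitive_isometries_and_local_biLipschitz_chart
    {X : Type*} [MetricSpace X]
    (htrans : ∀ x y : X, ∃ g : X → X, Function.Bijective g ∧
      (∀ a b : X, dist (g a) (g b) = dist a b) ∧ g x = y)
    {E : Type*} [NormedAddCommGroup E] [NormedSpace ℝ E] [CompleteSpace E]
    (x₀ : X) (δ ρ K : ℝ) (hδ : 0 < δ) (hρ : 0 < ρ) (hK : 1 ≤ K)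
    (β : X → E) (hβ₀ : β x₀ = 0)
    (hbilip : ∀ x ∈ Metric.ball x₀ δ, ∀ y ∈ Metric.ball x₀ δ,
      K⁻¹ * ‖β x - β y‖ ≤ dist x y ∧ dist x y ≤ K * ‖β x - β y‖)
    (hsurj : ∀ v : E, ‖v‖ < ρ → ∃ x ∈ Metric.ball x₀ δ, β x = v) :
    CompleteSpace X := by
  have hK0 : 0 < K := lt_of_lt_of_le one_pos hK
  apply Metric.complete_of_cauchySeq_tendsto
  intro u hu
  set ε : ℝ := min δ (ρ / K) / 2 with hεdef
  have hε : 0 < ε := by positivity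
  have hεδ : ε < δ := by
    have : min δ (ρ / K) ≤ δ := min_le_left _ _
    simp only [hεdef]; linarith
  have hKε : K * ε < ρ := by
    have h1 : min δ (ρ / K) ≤ ρ / K := min_le_right _ _
    have : ε < ρ / K := by simp only [hεdef]; nlinarith [div_pos hρ hK0]
    calc K * ε < K * (ρ / K) := by nlinarith
      _ = ρ := by field_simp
  -- main estimates from bilip
  have hle : ∀ x ∈ Metric.ball x₀ δ, ∀ y ∈ Metric.ball x₀ δ,
      ‖β x - β y‖ ≤ K * dist x y := by
    intro x hx y hy
    have h := (hbilip x hx y hy).1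
    have := mul_le_mul_of_nonneg_left h (le_of_lt hK0)
    rwa [← mul_assoc, mul_inv_cancel₀ (ne_of_gt hK0), one_mul] at this
  obtain ⟨N, hN⟩ := Metric.cauchySeq_iff'.mp hu ε hε
  obtain ⟨g, hgbij, hgiso, hgx⟩ := htrans (u N) x₀
  set v : ℕ → X := fun n => g (u (n + N)) with hvdef
  have hdistv : ∀ m n, dist (v m) (v n) = dist (u (m + N)) (u (n + N)) := by
    intro m n; exact hgiso _ _
  have hvball : ∀ n, dist (v n) x₀ < ε := by
    intro n
    have : dist (v n) x₀ = dist (u (n + N)) (u N) := by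
      rw [hvdef]; simp only [← hgx]; exact hgiso _ _
    rw [this]
    exact hN (n + N) (Nat.le_add_left N n)
  have hvδ : ∀ n, v n ∈ Metric.ball x₀ δ := fun n =>
    Metric.mem_ball.mpr (lt_trans (hvball n) hεδ)
  have hx₀ : x₀ ∈ Metric.ball x₀ δ := Metric.mem_ball_self hδ
  -- β ∘ v is Cauchy
  have hcv : CauchySeq (fun n => β (v n)) := by
    rw [Metric.cauchySeq_iff]
    intro ε' hε'
    obtain ⟨M, hM⟩ := Metric.cauchySeq_iff.mp hu (ε' / K) (by positivity)
    refine ⟨M, fun m hm n hn => ?_⟩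
    have h1 : ‖β (v m) - β (v n)‖ ≤ K * dist (v m) (v n) :=
      hle _ (hvδ m) _ (hvδ n)
    have h2 : dist (v m) (v n) < ε' / K := by
      rw [hdistv]
      exact hM _ (le_trans hm (Nat.le_add_right m N)) _ (le_trans hn (Nat.le_add_right n N))
    rw [dist_eq_norm]
    calc ‖β (v m) - β (v n)‖ ≤ K * dist (v m) (v n) := h1
      _ < K * (ε' / K) := by nlinarith
      _ = ε' := by field_simp
  obtain ⟨w, hw⟩ := cauchySeq_tendsto_of_complete hcv
  -- ‖w‖ < ρ
  have hnorm : ∀ n, ‖β (v n)‖ ≤ K * ε := by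
    intro n
    have h1 : ‖β (v n) - β x₀‖ ≤ K * dist (v n) x₀ := hle _ (hvδ n) _ hx₀
    rw [hβ₀, sub_zero] at h1
    calc ‖β (v n)‖ ≤ K * dist (v n) x₀ := h1
      _ ≤ K * ε := by nlinarith [hvball n]
  have hwnorm : ‖w‖ < ρ := by
    have hwle : ‖w‖ ≤ K * ε :=
      le_of_tendsto (hw.norm) (Filter.Eventually.of_forall hnorm)
    exact lt_of_le_of_lt hwle hKε
  obtain ⟨x', hx'ball, hx'⟩ := hsurj w hwnorm
  -- v → x'
  have hvx' : Filter.Tendsto v Filter.atTop (nhds x') := by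
    rw [tendsto_iff_dist_tendsto_zero]
    apply squeeze_zero (fun n => dist_nonneg)
      (g := fun n => K * ‖β (v n) - β x'‖)
    · intro n
      have := (hbilip _ (hvδ n) _ hx'ball).2
      exact this
    · have : Filter.Tendsto (fun n => β (v n) - β x') Filter.atTop (nhds 0) := by
        rw [hx']
        simpa using hw.sub_const w
      have hn := this.norm
      simp only [norm_zero] at hn
      simpa using hn.const_mul K
  -- pull back via g⁻¹
  obtain ⟨a, ha⟩ := hgbij.2 x'
  refine ⟨a, tendsto_nhds_of_cauchySeq_of_subseq hu
    (Filter.tendsto_add_atTop_nat N) ?_⟩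
  rw [tendsto_iff_dist_tendsto_zero]
  have : ∀ n, dist ((u ∘ (· + N)) n) a = dist (v n) x' := by
    intro n
    simp only [Function.comp]
    rw [hvdef, ← ha]
    exact (hgiso _ _).symm
  simp only [this]
  rw [← tendsto_iff_dist_tendsto_zero]
  exact hvx'
end
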